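/- arXiv:1403.4875 — 2 statements merged into one kernel-verified Lean document; each statement's English description precedes it below -/
import Mathlib

section
/- Let K be a field, L a Lie algebra over K, B : L × L → K an invariant bilinear form (B(⁅x,y⁆,z) = B(x,⁅y,z⁆) for all x,y,z), and (𝒢 i)_{i∈ℤ} submodules of L with ⁅𝒢 i, 𝒢 j⁆ ⊆ 𝒢(i+j) for all i,j and with B(x, y) = 0 whenever x ∈ 𝒢 i, y ∈ 𝒢 j and i + j ≠ 0. Let Y ∈ 𝒢(−2), set 𝔫 := ⨆_{i ≥ 1} 𝒢 i, 𝔫² := ⨆_{i ≥ 2} 𝒢 i, and 𝔫' := (𝒢 1 ⊓ {x : ⁅x,Y⁆ = 0}) ⊔ 𝔫². Then for all n ∈ 𝔫 and x ∈ 𝔫' one has B(Y, ⁅n, x⁆) = 0. Consequently, the linear functional X ↦ B(Y, X) vanishes on ⁅𝔫', 𝔫'⁆, and the submodule 𝔫'' := {x ∈ 𝔫' : B(Y, x) = 0} satisfies ⁅𝔫, 𝔫''⁆ ⊆ 𝔫'', i.e. 𝔫'' is a Lie ideal of 𝔫. -/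
/-- The centralizer `Y^# = {X ∈ L : ⁅X, Y⁆ = 0}` of an element `Y` of a Lie algebra `L`,
as a `K`-submodule of `L`. -/
def lieCentralizer (K : Type*) {L : Type*} [Field K] [LieRing L] [LieAlgebra K L]
    (Y : L) : Submodule K L where
  carrier := {X : L | ⁅X, Y⁆ = 0}
  add_mem' := by
    intro a b ha hb
    simp only [Set.mem_setOf_eq] at *
    rw [add_lie, ha, hb, add_zero]
  zero_mem' := zero_lie Y
  smul_mem' := by
    intro c x hx
    simp only [Set.mem_setOf_eq] at *
    rw [smul_lie, hx, smul_zero]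

/-!
On `𝔫²` the functional `x ↦ B(Y, ⁅n, x⁆)` vanishes for degree reasons: `⁅n, x⁆` has degree at
least `3`, while `Y` has degree `-2`. On `𝒢 1 ⊓ Y^#` it vanishes by invariance,
`B(Y, ⁅n, x⁆) = -B(⁅Y, x⁆, n) = 0`. Since `𝔫' ⊆ 𝔫` and `⁅𝔫, 𝔫⁆ ⊆ 𝔫² ⊆ 𝔫'`, the other two
claims follow.
-/

section Grading

variable {R L : Type*} [CommRing R] [LieRing L] [LieAlgebra R L]

theorem lie_mem_of_mem_biSup {ι κ : Type*} {p : ι → Prop} {q : κ → Prop}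
    {𝒢 : ι → Submodule R L} {ℋ : κ → Submodule R L} {S : Submodule R L}
    (h : ∀ i, p i → ∀ j, q j → ∀ x ∈ 𝒢 i, ∀ y ∈ ℋ j, ⁅x, y⁆ ∈ S)
    {x y : L} (hx : x ∈ ⨆ (i) (_ : p i), 𝒢 i) (hy : y ∈ ⨆ (j) (_ : q j), ℋ j) :
    ⁅x, y⁆ ∈ S := by
  have hle : Submodule.map₂ (LieAlgebra.ad R L : L →ₗ[R] L →ₗ[R] L)
      (⨆ (i) (_ : p i), 𝒢 i) (⨆ (j) (_ : q j), ℋ j) ≤ S := by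
    simp only [Submodule.map₂_iSup_left, Submodule.map₂_iSup_right, iSup_le_iff,
      Submodule.map₂_le]
    exact fun j hj i hi => h i hi j hj
  exact hle (Submodule.apply_mem_map₂ _ hx hy)

variable {𝒢 : ℤ → Submodule R L}

theorem lie_mem_iSup_ge_add (hG : ∀ i j : ℤ, ∀ x ∈ 𝒢 i, ∀ y ∈ 𝒢 j, ⁅x, y⁆ ∈ 𝒢 (i + j))
    {a b : ℤ} {x y : L} (hx : x ∈ ⨆ (i : ℤ) (_ : a ≤ i), 𝒢 i)
    (hy : y ∈ ⨆ (j : ℤ) (_ : b ≤ j), 𝒢 j) :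
    ⁅x, y⁆ ∈ ⨆ (k : ℤ) (_ : a + b ≤ k), 𝒢 k :=
  lie_mem_of_mem_biSup (fun i hi j hj x hx y hy =>
    le_iSup₂ (f := fun k (_ : a + b ≤ k) => 𝒢 k) (i + j) (by omega) (hG i j x hx y hy)) hx hy

theorem form_lie_eq_zero_of_mem_iSup_ge (B : L →ₗ[R] L →ₗ[R] R)
    (hG : ∀ i j : ℤ, ∀ x ∈ 𝒢 i, ∀ y ∈ 𝒢 j, ⁅x, y⁆ ∈ 𝒢 (i + j))
    (horth : ∀ i j : ℤ, i + j ≠ 0 → ∀ x ∈ 𝒢 i, ∀ y ∈ 𝒢 j, B x y = 0)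
    {m a b : ℤ} (hpos : 0 < m + a + b) {Y x y : L} (hY : Y ∈ 𝒢 m)
    (hx : x ∈ ⨆ (i : ℤ) (_ : a ≤ i), 𝒢 i) (hy : y ∈ ⨆ (j : ℤ) (_ : b ≤ j), 𝒢 j) :
    B Y ⁅x, y⁆ = 0 :=
  lie_mem_of_mem_biSup (S := LinearMap.ker (B Y)) (fun i hi j hj x hx y hy =>
    horth m (i + j) (by omega) Y hY _ (hG i j x hx y hy)) hx hy

end Grading

theorem form_lie_eq_zero_of_mem_lieCentralizer {K L : Type*} [Field K] [LieRing L]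
    [LieAlgebra K L] {B : L →ₗ[K] L →ₗ[K] K} (hinv : ∀ x y z : L, B ⁅x, y⁆ z = B x ⁅y, z⁆)
    {Y a : L} (ha : a ∈ lieCentralizer K Y) (n : L) : B Y ⁅n, a⁆ = 0 := by
  have hYa : ⁅Y, a⁆ = 0 := by rw [← lie_skew, show ⁅a, Y⁆ = 0 from ha, neg_zero]
  rw [← lie_skew, map_neg, ← hinv, hYa, map_zero, LinearMap.zero_apply, neg_zero]

/-- Let `B` be an invariant bilinear form on a Lie algebra `L`, and
`𝒢 i` (`i ∈ ℤ`) submodules with `⁅𝒢 i, 𝒢 j⁆ ⊆ 𝒢 (i+j)` and `B(𝒢 i, 𝒢 j) = 0` whenever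
`i + j ≠ 0`.  Let `Y ∈ 𝒢 (−2)`, and set `𝔫 := ⨆_{i ≥ 1} 𝒢 i`, `𝔫² := ⨆_{i ≥ 2} 𝒢 i`,
`𝔫' := (𝒢 1 ⊓ Y^#) ⊔ 𝔫²`.  Then `B(Y, ⁅𝔫, 𝔫'⁆) = 0`; consequently `X ↦ B Y X` vanishes
on `⁅𝔫', 𝔫'⁆`, and `𝔫'' := {x ∈ 𝔫' : B Y x = 0}` satisfies `⁅𝔫, 𝔫''⁆ ⊆ 𝔫''`, i.e. `𝔫''`
is a Lie ideal of `𝔫`. -/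
theorem character_data_on_nilpotent_part
    {K L : Type*} [Field K] [LieRing L] [LieAlgebra K L]
    (B : L →ₗ[K] L →ₗ[K] K)
    (hinv : ∀ x y z : L, B ⁅x, y⁆ z = B x ⁅y, z⁆)
    (𝒢 : ℤ → Submodule K L)
    (hG : ∀ i j : ℤ, ∀ x ∈ 𝒢 i, ∀ y ∈ 𝒢 j, ⁅x, y⁆ ∈ 𝒢 (i + j))
    (horth : ∀ i j : ℤ, i + j ≠ 0 → ∀ x ∈ 𝒢 i, ∀ y ∈ 𝒢 j, B x y = 0)
    (Y : L) (hY : Y ∈ 𝒢 (-2)) :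
    (∀ n ∈ (⨆ (i : ℤ) (_ : 1 ≤ i), 𝒢 i),
        ∀ x ∈ (𝒢 1 ⊓ lieCentralizer K Y) ⊔ (⨆ (i : ℤ) (_ : 2 ≤ i), 𝒢 i),
        B Y ⁅n, x⁆ = 0) ∧
    (∀ x ∈ (𝒢 1 ⊓ lieCentralizer K Y) ⊔ (⨆ (i : ℤ) (_ : 2 ≤ i), 𝒢 i),
        ∀ y ∈ (𝒢 1 ⊓ lieCentralizer K Y) ⊔ (⨆ (i : ℤ) (_ : 2 ≤ i), 𝒢 i),
        B Y ⁅x, y⁆ = 0) ∧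
    (∀ n ∈ (⨆ (i : ℤ) (_ : 1 ≤ i), 𝒢 i),
        ∀ x ∈ (𝒢 1 ⊓ lieCentralizer K Y) ⊔ (⨆ (i : ℤ) (_ : 2 ≤ i), 𝒢 i),
        B Y x = 0 →
          ⁅n, x⁆ ∈ (𝒢 1 ⊓ lieCentralizer K Y) ⊔ (⨆ (i : ℤ) (_ : 2 ≤ i), 𝒢 i) ∧
          B Y ⁅n, x⁆ = 0) := by
  have h𝔫'_le_𝔫 : (𝒢 1 ⊓ lieCentralizer K Y) ⊔ (⨆ (i : ℤ) (_ : 2 ≤ i), 𝒢 i) ≤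
      ⨆ (i : ℤ) (_ : 1 ≤ i), 𝒢 i :=
    sup_le (inf_le_left.trans (le_iSup₂ (f := fun i (_ : 1 ≤ i) => 𝒢 i) 1 le_rfl))
      (biSup_mono fun _ hi => by omega)
  have hbracket : ∀ n ∈ (⨆ (i : ℤ) (_ : 1 ≤ i), 𝒢 i),
      ∀ x ∈ (𝒢 1 ⊓ lieCentralizer K Y) ⊔ (⨆ (i : ℤ) (_ : 2 ≤ i), 𝒢 i), B Y ⁅n, x⁆ = 0 := by
    intro n hn x hx
    obtain ⟨a, ha, b, hb, rfl⟩ := Submodule.mem_sup.mp hx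
    rw [lie_add, map_add, form_lie_eq_zero_of_mem_lieCentralizer hinv ha.2,
      form_lie_eq_zero_of_mem_iSup_ge B hG horth (by norm_num) hY hn hb, add_zero]
  refine ⟨hbracket, fun x hx y hy => hbracket x (h𝔫'_le_𝔫 hx) y hy,
    fun n hn x hx _ => ⟨?_, hbracket n hn x hx⟩⟩
  exact Submodule.mem_sup_right (lie_mem_iSup_ge_add (a := 1) (b := 1) hG hn (h𝔫'_le_𝔫 hx))
end

section
/- Let G̃ and G be measurable groups, μ̃ a measure on G̃ and μ a measure on G. Let p : G̃ → G be a group homomorphism, H a measurable subgroup of G, and s : H → G̃ a group homomorphism with p(s(h)) = h for all h ∈ H, such that x ↦ s(x) is a measurable embedding of H into G̃ whose image s(H) is measurable, and which is measure-preserving in the sense that μ̃(s(A)) = μ(A) for every measurable A ⊆ H. For a measurable function φ : G → ℂ with support contained in H, define its lift φ̃ : G̃ → ℂ by φ̃(x) = φ(p(x)) if x ∈ s(H) and φ̃(x) = 0 otherwise. Then for all measurable φ, φ' : G → ℂ with support contained in H, the convolution of the lifts equals the lift of the convolution: for every x̃ ∈ G̃, ∫_{G̃} φ̃(x̃ y⁻¹)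 φ̃'(y) dμ̃(y) = ψ̃(x̃), where ψ : G → ℂ is given by ψ(x) = ∫_{G} φ(x y⁻¹) φ'(y) dμ(y) (note that ψ is again supported in H, so its lift ψ̃ is defined). -/
/-!
Both sides vanish off `s(H)`: if `x y⁻¹` and `y` both lie in the subgroup `s(H)`, so does `x`.
At `x = s h₀`, the integral over `G̃` of a function supported in `s(H)` is an integral over `H`
against `μ̃` pulled back along `s`, and the integral over `G` of a function supported in `H` is an
integral over `H` against `μ` pulled back along the inclusion. These two measures on `H` agree
because `s` is measure-preserving, and since `s` is a homomorphism splitting `p`, the two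
integrands on `H` are both `h ↦ φ(h₀ h⁻¹) φ'(h)`.
-/

open MeasureTheory Classical

/-- The lift to `G̃` of a function `φ : G → ℂ` along a homomorphism `p : G̃ → G`,
relative to a subset `S ⊆ G̃` (the image of a splitting): it equals `φ ∘ p` on `S`
and `0` elsewhere. -/
noncomputable def liftFun {G' G : Type*} (p : G' → G) (S : Set G') (φ : G → ℂ) :
    G' → ℂ :=
  fun x => if x ∈ S then φ (p x) else 0

theorem MeasurableEmbedding.integral_eq_integral_comap {α β E : Type*} [MeasurableSpace α]
    [MeasurableSpace β] [NormedAddCommGroup E] [NormedSpace ℝ E] {f : α → β}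
    (hf : MeasurableEmbedding f) (μ : Measure β) {g : β → E}
    (hg : ∀ y ∉ Set.range f, g y = 0) :
    ∫ y, g y ∂μ = ∫ x, g (f x) ∂μ.comap f := by
  rw [← hf.integral_map, hf.map_comap, setIntegral_eq_integral_of_forall_compl_eq_zero hg]

section liftFun

variable {G' G : Type*} (p : G' → G) (S : Set G') (φ φ' : G → ℂ)

theorem liftFun_of_mem {x : G'} (hx : x ∈ S) : liftFun p S φ x = φ (p x) := if_pos hx

theorem liftFun_of_notMem {x : G'} (hx : x ∉ S) : liftFun p S φ x = 0 := if_neg hx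

theorem liftFun_mul_liftFun_of_notMem [Group G'] (K : Subgroup G') {x : G'} (hx : x ∉ K)
    (y : G') : liftFun p K φ (x * y⁻¹) * liftFun p K φ' y = 0 := by
  by_cases hy : y ∈ K
  · have hxy : x * y⁻¹ ∉ K := fun hxy => hx (by simpa using K.mul_mem hxy hy)
    rw [liftFun_of_notMem p _ φ hxy, zero_mul]
  · rw [liftFun_of_notMem p _ φ' hy, mul_zero]

end liftFun

theorem convolution_of_lifts_eq_lift_of_convolution_general
    {G' G : Type*} [Group G'] [Group G] [MeasurableSpace G'] [MeasurableSpace G]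
    (μ' : Measure G') (μ : Measure G)
    (p : G' →* G) (H : Subgroup G) (hH : MeasurableSet (H : Set G))
    (s : H →* G') (hsec : ∀ h : H, p (s h) = (h : G))
    (hemb : MeasurableEmbedding (fun h : H => s h))
    (hpres : ∀ A : Set H, MeasurableSet A →
      μ' ((fun h : H => s h) '' A) = μ ((Subtype.val : H → G) '' A))
    (φ φ' : G → ℂ)
    (hsupp' : Function.support φ' ⊆ (H : Set G))
    (x : G') :
    ∫ y, liftFun (⇑p) (Set.range fun h : H => s h) φ (x * y⁻¹) *
          liftFun (⇑p) (Set.range fun h : H => s h) φ' y ∂μ'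
      = liftFun (⇑p) (Set.range fun h : H => s h)
          (fun z => ∫ y, φ (z * y⁻¹) * φ' y ∂μ) x := by
  have hval : MeasurableEmbedding (Subtype.val : H → G) := .subtype_coe hH
  have hcomap : μ'.comap (fun h : H => s h) = μ.comap Subtype.val := by
    ext A hA
    rw [hemb.comap_apply, hval.comap_apply, hpres A hA]
  have hlift : ∀ (ψ : G → ℂ) (h : H), liftFun p (Set.range fun h : H => s h) ψ (s h) = ψ h :=
    fun ψ h => by rw [liftFun_of_mem _ _ _ (Set.mem_range_self h), hsec]
  by_cases hx : x ∈ Set.range fun h : H => s h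
  · obtain ⟨h₀, rfl⟩ := hx
    rw [hlift, hemb.integral_eq_integral_comap, hcomap, hval.integral_eq_integral_comap]
    · simp only [← map_inv, ← map_mul, hlift, Subgroup.coe_mul, Subgroup.coe_inv]
    · intro y hy
      rw [Subtype.range_coe] at hy
      rw [Function.notMem_support.mp (mt (@hsupp' y) hy), mul_zero]
    · intro y hy
      rw [liftFun_of_notMem _ _ _ hy, mul_zero]
  · have hS : (Set.range fun h : H => s h) = (s.range : Set G') := s.coe_range.symm
    rw [hS] at hx ⊢
    rw [liftFun_of_notMem _ _ _ hx]
    simp only [liftFun_mul_liftFun_of_notMem _ _ _ _ hx, integral_zero]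

/-- Let `p : G̃ → G` be a homomorphism of measurable groups, `H` a
measurable subgroup of `G`, and `s : H → G̃` a homomorphic section of `p` over `H` which
is a measurable embedding with measurable image and which is measure-preserving
(`μ̃(s(A)) = μ(A)` for all measurable `A ⊆ H`).  For measurable `φ, φ' : G → ℂ` supported
in `H`, the convolution of the lifts `φ̃ ∗ φ̃'` (on `G̃`) equals the lift of the
convolution `φ ∗ φ'` (on `G`). -/
theorem convolution_of_lifts_eq_lift_of_convolution
    {G' G : Type*} [Group G'] [Group G] [MeasurableSpace G'] [MeasurableSpace G]
    [MeasurableMul₂ G'] [MeasurableInv G'] [MeasurableMul₂ G] [MeasurableInv G]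
    (μ' : Measure G') (μ : Measure G)
    (p : G' →* G) (H : Subgroup G) (hH : MeasurableSet (H : Set G))
    (s : H →* G') (hsec : ∀ h : H, p (s h) = (h : G))
    (hemb : MeasurableEmbedding (fun h : H => s h))
    (hrange : MeasurableSet (Set.range fun h : H => s h))
    (hpres : ∀ A : Set H, MeasurableSet A →
      μ' ((fun h : H => s h) '' A) = μ ((Subtype.val : H → G) '' A))
    (φ φ' : G → ℂ) (hφ : Measurable φ) (hφ' : Measurable φ')
    (hsupp : Function.support φ ⊆ (H : Set G))
    (hsupp' : Function.support φ' ⊆ (H : Set G))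
    (x : G') :
    ∫ y, liftFun (⇑p) (Set.range fun h : H => s h) φ (x * y⁻¹) *
          liftFun (⇑p) (Set.range fun h : H => s h) φ' y ∂μ'
      = liftFun (⇑p) (Set.range fun h : H => s h)
          (fun z => ∫ y, φ (z * y⁻¹) * φ' y ∂μ) x :=
  convolution_of_lifts_eq_lift_of_convolution_general μ' μ p H hH s hsec hemb hpres φ φ' hsupp' x
end
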